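/- Assume the setting and hypotheses of the preceding Lemma A.7 bound, and in addition that 𝕏 and 𝕌 are convex, C_i : ℝᵐ → ℝ is convex on 𝕌, J : ℝⁿ → ℝ is convex on 𝕏, and for every x ∈ 𝕏ᵈ there exists u ∈ 𝕌 with f_s(x) + Bu ∈ D. Define T J₀(x) := min { C_i(u) + γ · Σ_{w∈W} p(w) · J(f_s(x) + Bu + w) : u ∈ 𝕌, f_s(x) + Bu ∈ D }. Then for every x ∈ 𝕏ᵈ, | Ê(x) − T J₀(x) | ≤ γ·e_e + e_d, where e_d := e_u + e_v + e_x + e_y + e_z. Equivalently, with T̂ᵈ Jᵈ(x) := C_s(x) + Ê(x) and T J(x) := C_s(x) + T J₀(x), one has max_{x∈𝕏ᵈ} |T̂ᵈ Jᵈ(x) − T J(x)| ≤ γ·e_e + e_d. -/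

import Mathlib

open scoped RealInnerProductSpace

/-- The conjugate of `h` over the set `S`: `h^{*S}(y) = sup_{x ∈ S} (⟨x,y⟩ − h(x))`. -/
noncomputable def conjOn {k : ℕ} (S : Set (EuclideanSpace ℝ (Fin k)))
    (h : EuclideanSpace ℝ (Fin k) → ℝ) (y : EuclideanSpace ℝ (Fin k)) : ℝ :=
  sSup ((fun x => ⟪x, y⟫ - h x) '' S)

/-- One-sided Hausdorff distance from `S` to `T`: `d⃗(S,T) = sup_{s∈S} inf_{t∈T} ‖s − t‖`. -/
noncomputable def dOneSided {k : ℕ} (S T : Set (EuclideanSpace ℝ (Fin k))) : ℝ :=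
  sSup ((fun s => Metric.infDist s T) '' S)

/-!
Under the convexity assumptions the conjugate dual of the one-step problem
`min {Ci u + ε (v + B u) : u ∈ U, v + B u ∈ D}` has no duality gap: a level `c` below the primal
value is separated from the closed convex set `valueEpigraph` by a hyperplane, whose normal is a
dual vector `y` with `⟪y, v⟫ - φ y ≥ c`. So the Bellman update `T J₀ x` equals `φ^*(fs x)`, and
it remains to compare `Ê x` with `φ^*(fs x)`. By hypothesis `Ê x` exceeds
`max_{y ∈ Y} (⟪y, fs x⟫ - ϕ y)` by at most `e_z`; on `Y`, `ϕ` is within `e_u + e_x + γ e_e` below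
and `e_v + γ e_e` above `φ` (nearest-grid-point estimates for the discretised conjugates); and
the maximum over `Y` misses `φ^*(fs x)` by at most `e_y`, since a maximiser lies within `δ` of
`Y` and `y ↦ ⟪y, fs x⟫ - φ y` is `(‖fs x‖ + M)`-Lipschitz.
-/

open Metric Set
open scoped Pointwise

theorem continuousOn_of_abs_sub_le {α : Type*} [SeminormedAddCommGroup α] {S : Set α}
    {f : α → ℝ} {L : ℝ} (hf : ∀ x ∈ S, ∀ x' ∈ S, |f x - f x'| ≤ L * ‖x - x'‖) :
    ContinuousOn f S :=
  (LipschitzOnWith.of_dist_le' fun x hx x' hx' => by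
    rw [Real.dist_eq, dist_eq_norm]; exact hf x hx x' hx').continuousOn

theorem Finset.sup'_le_sup'_add {ι : Type*} {s : Finset ι} (hs : s.Nonempty) {f g : ι → ℝ}
    {c : ℝ} (h : ∀ i ∈ s, f i ≤ g i + c) : s.sup' hs f ≤ s.sup' hs g + c :=
  Finset.sup'_le _ _ fun i hi => (h i hi).trans (by gcongr; exact Finset.le_sup' g hi)

theorem norm_le_sSup_norm_image {α : Type*} [SeminormedAddCommGroup α] {S : Set α}
    (hS : IsCompact S) {x : α} (hx : x ∈ S) : ‖x‖ ≤ sSup ((fun x => ‖x‖) '' S) :=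
  le_csSup (hS.bddAbove_image continuous_norm.continuousOn) ⟨x, hx, rfl⟩

section Conjugate

variable {k : ℕ} {S : Set (EuclideanSpace ℝ (Fin k))} {h h' : EuclideanSpace ℝ (Fin k) → ℝ}
  {Sd : Finset (EuclideanSpace ℝ (Fin k))} {L η : ℝ}

theorem bddAbove_conjOn_image (hS : IsCompact S) (hh : ContinuousOn h S)
    (y : EuclideanSpace ℝ (Fin k)) : BddAbove ((fun x => ⟪x, y⟫ - h x) '' S) :=
  hS.bddAbove_image ((continuous_id.inner continuous_const).continuousOn.sub hh)

theorem le_conjOn (hS : IsCompact S) (hh : ContinuousOn h S) {x : EuclideanSpace ℝ (Fin k)}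
    (hx : x ∈ S) (y : EuclideanSpace ℝ (Fin k)) : ⟪x, y⟫ - h x ≤ conjOn S h y :=
  le_csSup (bddAbove_conjOn_image hS hh y) ⟨x, hx, rfl⟩

theorem conjOn_le (hS : S.Nonempty) {y : EuclideanSpace ℝ (Fin k)} {c : ℝ}
    (hc : ∀ x ∈ S, ⟪x, y⟫ - h x ≤ c) : conjOn S h y ≤ c :=
  csSup_le (hS.image _) (forall_mem_image.2 hc)

theorem conjOn_add_conjOn_le {l : ℕ} {S' : Set (EuclideanSpace ℝ (Fin l))}
    {h' : EuclideanSpace ℝ (Fin l) → ℝ} (hS : S.Nonempty) (hS' : S'.Nonempty)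
    {y : EuclideanSpace ℝ (Fin k)} {y' : EuclideanSpace ℝ (Fin l)} {c : ℝ}
    (hc : ∀ x ∈ S, ∀ x' ∈ S', (⟪x, y⟫ - h x) + (⟪x', y'⟫ - h' x') ≤ c) :
    conjOn S h y + conjOn S' h' y' ≤ c :=
  le_sub_iff_add_le.1 <| conjOn_le hS fun x hx =>
    le_sub_comm.1 <| conjOn_le hS' fun x' hx' => le_sub_iff_add_le'.2 (hc x hx x' hx')

theorem conjOn_le_conjOn_add (hS : IsCompact S) (hSne : S.Nonempty) (hh : ContinuousOn h S)
    {R : ℝ} (hR : ∀ x ∈ S, ‖x‖ ≤ R) (y y' : EuclideanSpace ℝ (Fin k)) :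
    conjOn S h y ≤ conjOn S h y' + R * ‖y - y'‖ :=
  conjOn_le hSne fun x hx => by
    have hshift : ⟪x, y - y'⟫ ≤ R * ‖y - y'‖ :=
      (real_inner_le_norm _ _).trans (mul_le_mul_of_nonneg_right (hR x hx) (norm_nonneg _))
    rw [inner_sub_right] at hshift
    linarith [le_conjOn hS hh hx y']

theorem abs_conjOn_sub_conjOn_le (hS : IsCompact S) (hSne : S.Nonempty) (hh : ContinuousOn h S)
    {R : ℝ} (hR : ∀ x ∈ S, ‖x‖ ≤ R) (y y' : EuclideanSpace ℝ (Fin k)) :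
    |conjOn S h y - conjOn S h y'| ≤ R * ‖y - y'‖ := by
  have h₁ := conjOn_le_conjOn_add hS hSne hh hR y y'
  have h₂ := conjOn_le_conjOn_add hS hSne hh hR y' y
  rw [norm_sub_rev] at h₂
  exact abs_sub_le_iff.2 ⟨by linarith, by linarith⟩

theorem infDist_le_dOneSided (hS : IsCompact S) {x : EuclideanSpace ℝ (Fin k)} (hx : x ∈ S)
    (T : Set (EuclideanSpace ℝ (Fin k))) : infDist x T ≤ dOneSided S T :=
  le_csSup (hS.bddAbove_image (continuous_infDist_pt T).continuousOn) ⟨x, hx, rfl⟩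

theorem dOneSided_nonneg (S T : Set (EuclideanSpace ℝ (Fin k))) : 0 ≤ dOneSided S T :=
  Real.sSup_nonneg (forall_mem_image.2 fun _ _ => infDist_nonneg)

theorem finset_sup'_le_conjOn (hS : IsCompact S) (hh : ContinuousOn h S)
    (hSd : Sd.Nonempty) (hSdS : (Sd : Set _) ⊆ S)
    (y : EuclideanSpace ℝ (Fin k)) : Sd.sup' hSd (fun x => ⟪x, y⟫ - h x) ≤ conjOn S h y :=
  Finset.sup'_le _ _ fun _ hx => le_conjOn hS hh (hSdS hx) y

theorem conjOn_le_finset_sup'_add (hS : IsCompact S) (hL : 0 ≤ L)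
    (hlip : ∀ x ∈ S, ∀ x' ∈ S, |h x - h x'| ≤ L * ‖x - x'‖)
    (hSd : Sd.Nonempty) (hSdS : (Sd : Set _) ⊆ S)
    (y : EuclideanSpace ℝ (Fin k)) :
    conjOn S h y ≤ Sd.sup' hSd (fun x => ⟪x, y⟫ - h x) + (‖y‖ + L) * dOneSided S Sd := by
  refine conjOn_le ((Finset.coe_nonempty.2 hSd).mono hSdS) fun x hx => ?_
  obtain ⟨x', hx', hdist⟩ :=
    Sd.finite_toSet.isCompact.exists_infDist_eq_dist (Finset.coe_nonempty.2 hSd) x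
  have hd : ‖x - x'‖ ≤ dOneSided S Sd := by
    rw [← dist_eq_norm, ← hdist]
    exact infDist_le_dOneSided hS hx _
  have hinner : ⟪x - x', y⟫ ≤ ‖x - x'‖ * ‖y‖ := real_inner_le_norm _ _
  have hcost : h x' - h x ≤ L * ‖x - x'‖ := by
    rw [norm_sub_rev]
    exact (le_abs_self _).trans (hlip x' (hSdS hx') x hx)
  have hsup := Sd.le_sup' (fun x => ⟪x, y⟫ - h x) hx'
  calc ⟪x, y⟫ - h x = (⟪x', y⟫ - h x') + (⟪x - x', y⟫ + (h x' - h x)) := by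
        rw [inner_sub_left]; ring
    _ ≤ Sd.sup' hSd (fun x => ⟪x, y⟫ - h x) + (‖y‖ + L) * ‖x - x'‖ := by
        linarith
    _ ≤ _ := by gcongr

theorem finset_sup'_le_conjOn_add (hS : IsCompact S) (hh : ContinuousOn h S)
    (hSd : Sd.Nonempty) (hSdS : (Sd : Set _) ⊆ S)
    (hη : ∀ x ∈ Sd, |h x - h' x| ≤ η) (y : EuclideanSpace ℝ (Fin k)) :
    Sd.sup' hSd (fun x => ⟪x, y⟫ - h' x) ≤ conjOn S h y + η := by
  have hshift := Finset.sup'_le_sup'_add hSd (f := fun x => ⟪x, y⟫ - h' x)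
    (g := fun x => ⟪x, y⟫ - h x) (c := η) fun x hx => by linarith [(abs_le.1 (hη x hx)).2]
  linarith [finset_sup'_le_conjOn hS hh hSd hSdS y]

theorem conjOn_le_finset_sup'_add_of_abs_sub_le (hS : IsCompact S) (hL : 0 ≤ L)
    (hlip : ∀ x ∈ S, ∀ x' ∈ S, |h x - h x'| ≤ L * ‖x - x'‖)
    (hSd : Sd.Nonempty) (hSdS : (Sd : Set _) ⊆ S)
    (hη : ∀ x ∈ Sd, |h x - h' x| ≤ η) (y : EuclideanSpace ℝ (Fin k)) :
    conjOn S h y ≤ Sd.sup' hSd (fun x => ⟪x, y⟫ - h' x) + η + (‖y‖ + L) * dOneSided S Sd := by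
  have hshift := Finset.sup'_le_sup'_add hSd (f := fun x => ⟪x, y⟫ - h x)
    (g := fun x => ⟪x, y⟫ - h' x) (c := η) fun x hx => by linarith [(abs_le.1 (hη x hx)).1]
  linarith [conjOn_le_finset_sup'_add hS hL hlip hSd hSdS y]

end Conjugate

theorem le_finset_sup'_add_of_infDist_le {E : Type*} [NormedAddCommGroup E]
    [InnerProductSpace ℝ E] {Y : Finset E} (hY : Y.Nonempty) {φ : E → ℝ} {M : ℝ} (hM : 0 ≤ M)
    (hφ : ∀ y y', |φ y - φ y'| ≤ M * ‖y - y'‖) (v : E) {y₀ : E} {δ : ℝ}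
    (hy₀ : infDist y₀ Y ≤ δ) :
    ⟪y₀, v⟫ - φ y₀ ≤ Y.sup' hY (fun y => ⟪y, v⟫ - φ y) + (‖v‖ + M) * δ := by
  obtain ⟨y, hy, hdist⟩ :=
    Y.finite_toSet.isCompact.exists_infDist_eq_dist (Finset.coe_nonempty.2 hY) y₀
  have hd : ‖y₀ - y‖ ≤ δ := by rw [← dist_eq_norm, ← hdist]; exact hy₀
  have hinner : ⟪y₀ - y, v⟫ ≤ ‖y₀ - y‖ * ‖v‖ := real_inner_le_norm _ _
  have hvalue : φ y - φ y₀ ≤ M * ‖y₀ - y‖ := by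
    rw [norm_sub_rev]; exact (le_abs_self _).trans (hφ y y₀)
  have hsup := Y.le_sup' (fun y => ⟪y, v⟫ - φ y) hy
  calc ⟪y₀, v⟫ - φ y₀ = (⟪y, v⟫ - φ y) + (⟪y₀ - y, v⟫ + (φ y - φ y₀)) := by
        rw [inner_sub_left]; ring
    _ ≤ Y.sup' hY (fun y => ⟪y, v⟫ - φ y) + (‖v‖ + M) * ‖y₀ - y‖ := by
        linarith
    _ ≤ _ := by gcongr

theorem sub_sSup_range_mem_Icc {E : Type*} [NormedAddCommGroup E] [InnerProductSpace ℝ E]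
    {Y : Finset E} (hY : Y.Nonempty) {φ ϕ : E → ℝ} {M a b : ℝ} (hM : 0 ≤ M)
    (hφ : ∀ y y', |φ y - φ y'| ≤ M * ‖y - y'‖) (hφϕ : ∀ y ∈ Y, φ y ≤ ϕ y + a)
    (hϕφ : ∀ y ∈ Y, ϕ y ≤ φ y + b) {v : E} (hbdd : BddAbove (range fun y => ⟪y, v⟫ - φ y))
    {y₀ : E} (hy₀ : sSup (range fun y => ⟪y, v⟫ - φ y) = ⟪y₀, v⟫ - φ y₀) {δ : ℝ}
    (hδ : infDist y₀ Y ≤ δ) {t e : ℝ}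
    (ht : 0 ≤ t - Y.sup' hY (fun y => ⟪y, v⟫ - ϕ y) ∧ t - Y.sup' hY (fun y => ⟪y, v⟫ - ϕ y) ≤ e) :
    t - sSup (range fun y => ⟪y, v⟫ - φ y) ∈ Icc (-(b + (‖v‖ + M) * δ)) (a + e) := by
  have hϕ := Finset.sup'_le_sup'_add hY (f := fun y => ⟪y, v⟫ - ϕ y)
    (g := fun y => ⟪y, v⟫ - φ y) (c := a) fun y hy => by linarith [hφϕ y hy]
  have hφ' := Finset.sup'_le_sup'_add hY (f := fun y => ⟪y, v⟫ - φ y)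
    (g := fun y => ⟪y, v⟫ - ϕ y) (c := b) fun y hy => by linarith [hϕφ y hy]
  have hle : Y.sup' hY (fun y => ⟪y, v⟫ - φ y) ≤ sSup (range fun y => ⟪y, v⟫ - φ y) :=
    Finset.sup'_le _ _ fun y _ => le_csSup hbdd (mem_range_self y)
  have hge := le_finset_sup'_add_of_infDist_le hY hM hφ v hδ
  rw [← hy₀] at hge
  exact ⟨by linarith, by linarith⟩

theorem isCompact_setOf_forall_add_mem {G : Type*} [AddGroup G] [TopologicalSpace G]
    [IsTopologicalAddGroup G] [T2Space G] {X : Set G} (hX : IsCompact X) {W : Set G}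
    (hW : W.Nonempty) : IsCompact {z | ∀ w ∈ W, z + w ∈ X} := by
  obtain ⟨w₀, hw₀⟩ := hW
  refine ((Homeomorph.addRight w₀).isCompact_preimage.2 hX).of_isClosed_subset ?_
    fun z hz => hz w₀ hw₀
  simp only [ofPred_forall]
  exact isClosed_biInter fun w _ => hX.isClosed.preimage (continuous_add_const w)

theorem convex_setOf_forall_add_mem {𝕜 E : Type*} [Semiring 𝕜] [PartialOrder 𝕜]
    [AddCommMonoid E] [Module 𝕜 E] {X : Set E} (hX : Convex 𝕜 X) (W : Set E) :
    Convex 𝕜 {z | ∀ w ∈ W, z + w ∈ X} := by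
  simp only [ofPred_forall]
  exact convex_iInter₂ fun w _ => hX.translate_preimage_left w

section ExpectedCost

variable {E : Type*} {X : Set E} {J : E → ℝ} {W : Finset E} {p : E → ℝ} {γ : ℝ}

theorem convexOn_expectedCost [AddCommGroup E] [Module ℝ E] (hJ : ConvexOn ℝ X J)
    (hp : ∀ w ∈ W, 0 ≤ p w) (hγ : 0 ≤ γ) :
    ConvexOn ℝ {z | ∀ w ∈ W, z + w ∈ X} (fun z => γ * ∑ w ∈ W, p w * J (z + w)) := by
  refine ⟨convex_setOf_forall_add_mem hJ.1 _, fun z₁ hz₁ z₂ hz₂ a b ha hb hab => ?_⟩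
  have hterm : ∀ w ∈ W, p w * J (a • z₁ + b • z₂ + w) ≤
      a * (p w * J (z₁ + w)) + b * (p w * J (z₂ + w)) := fun w hw => by
    have hshift : a • (z₁ + w) + b • (z₂ + w) = a • z₁ + b • z₂ + w := by
      rw [smul_add, smul_add, add_add_add_comm, ← add_smul, hab, one_smul]
    have hJw := hJ.2 (hz₁ w hw) (hz₂ w hw) ha hb hab
    rw [hshift, smul_eq_mul, smul_eq_mul] at hJw
    nlinarith [mul_le_mul_of_nonneg_left hJw (hp w hw)]
  calc γ * ∑ w ∈ W, p w * J (a • z₁ + b • z₂ + w)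
      ≤ γ * ∑ w ∈ W, (a * (p w * J (z₁ + w)) + b * (p w * J (z₂ + w))) := by
        gcongr with w hw; exact hterm w hw
    _ = a • (γ * ∑ w ∈ W, p w * J (z₁ + w)) + b • (γ * ∑ w ∈ W, p w * J (z₂ + w)) := by
        rw [Finset.sum_add_distrib, ← Finset.mul_sum, ← Finset.mul_sum, smul_eq_mul, smul_eq_mul]
        ring

theorem abs_expectedCost_sub_le [SeminormedAddCommGroup E] {K : ℝ}
    (hJ : ∀ x ∈ X, ∀ x' ∈ X, |J x - J x'| ≤ K * ‖x - x'‖) (hp : ∀ w ∈ W, 0 ≤ p w)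
    (hpsum : ∑ w ∈ W, p w = 1) (hγ : 0 ≤ γ) {z z' : E} (hz : ∀ w ∈ W, z + w ∈ X)
    (hz' : ∀ w ∈ W, z' + w ∈ X) :
    |γ * ∑ w ∈ W, p w * J (z + w) - γ * ∑ w ∈ W, p w * J (z' + w)| ≤ γ * K * ‖z - z'‖ := by
  have hterm : ∀ w ∈ W, |p w * J (z + w) - p w * J (z' + w)| ≤ p w * (K * ‖z - z'‖) :=
    fun w hw => by
      rw [← mul_sub, abs_mul, abs_of_nonneg (hp w hw)]
      refine mul_le_mul_of_nonneg_left ?_ (hp w hw)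
      simpa using hJ _ (hz w hw) _ (hz' w hw)
  calc |γ * ∑ w ∈ W, p w * J (z + w) - γ * ∑ w ∈ W, p w * J (z' + w)|
      = γ * |∑ w ∈ W, (p w * J (z + w) - p w * J (z' + w))| := by
        rw [← mul_sub, ← Finset.sum_sub_distrib, abs_mul, abs_of_nonneg hγ]
    _ ≤ γ * ∑ w ∈ W, p w * (K * ‖z - z'‖) := by
        gcongr
        exact (Finset.abs_sum_le_sum_abs _ _).trans (Finset.sum_le_sum hterm)
    _ = γ * K * ‖z - z'‖ := by rw [← Finset.sum_mul, hpsum]; ring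

end ExpectedCost

section Separation

variable {E F : Type*} [NormedAddCommGroup E] [InnerProductSpace ℝ E] [NormedAddCommGroup F]
  [InnerProductSpace ℝ F]

/-- The epigraph of the perturbed value `s ↦ inf {Ci u + ε z : u ∈ U, z ∈ D, B u - z = s}`; the
primal problem at `v` is its fibre over `-v`. -/
def valueEpigraph (B : E →L[ℝ] F) (U : Set E) (D : Set F) (Ci : E → ℝ) (ε : F → ℝ) :
    Set (F × ℝ) :=
  {q | ∃ u ∈ U, ∃ z ∈ D, q.1 = B u - z ∧ Ci u + ε z ≤ q.2}

variable {B : E →L[ℝ] F} {U : Set E} {D : Set F} {Ci : E → ℝ} {ε : F → ℝ}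

theorem convex_valueEpigraph (hCi : ConvexOn ℝ U Ci) (hε : ConvexOn ℝ D ε) :
    Convex ℝ (valueEpigraph B U D Ci ε) := by
  rintro _ ⟨u₁, hu₁, z₁, hz₁, h₁, hle₁⟩ _ ⟨u₂, hu₂, z₂, hz₂, h₂, hle₂⟩ a b ha hb hab
  refine ⟨a • u₁ + b • u₂, hCi.1 hu₁ hu₂ ha hb hab, a • z₁ + b • z₂, hε.1 hz₁ hz₂ ha hb hab,
    ?_, ?_⟩
  · simp only [Prod.fst_add, Prod.smul_fst, h₁, h₂, map_add, map_smul]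
    module
  · have hCiab := hCi.2 hu₁ hu₂ ha hb hab
    have hεab := hε.2 hz₁ hz₂ ha hb hab
    simp only [Prod.snd_add, Prod.smul_snd, smul_eq_mul] at hCiab hεab ⊢
    nlinarith [mul_le_mul_of_nonneg_left hle₁ ha, mul_le_mul_of_nonneg_left hle₂ hb]

theorem valueEpigraph_eq_image_add :
    valueEpigraph B U D Ci ε =
      (fun q : E × F => (B q.1 - q.2, Ci q.1 + ε q.2)) '' (U ×ˢ D) +
        ({(0 : F)} ×ˢ Ici (0 : ℝ)) := by
  ext ⟨s, t⟩
  constructor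
  · rintro ⟨u, hu, z, hz, rfl, hle⟩
    exact ⟨_, ⟨(u, z), ⟨hu, hz⟩, rfl⟩, (0, t - (Ci u + ε z)), ⟨rfl, sub_nonneg.2 hle⟩,
      by simp⟩
  · rintro ⟨_, ⟨⟨u, z⟩, ⟨hu, hz⟩, rfl⟩, ⟨_, r⟩, ⟨rfl, hr⟩, hsum⟩
    simp only [Prod.mk_add_mk, add_zero, Prod.mk.injEq] at hsum
    refine ⟨u, hu, z, hz, hsum.1.symm, ?_⟩
    rw [← hsum.2]
    linarith [show (0 : ℝ) ≤ r from hr]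

theorem isClosed_valueEpigraph (hU : IsCompact U) (hD : IsCompact D) (hCi : ContinuousOn Ci U)
    (hε : ContinuousOn ε D) : IsClosed (valueEpigraph B U D Ci ε) := by
  rw [valueEpigraph_eq_image_add]
  refine (isClosed_singleton.prod isClosed_Ici).add_left_of_isCompact
    ((hU.prod hD).image_of_continuousOn ?_)
  exact ((B.continuous.comp continuous_fst).sub continuous_snd).continuousOn.prodMk
    ((hCi.comp continuousOn_fst fun _ h => h.1).add (hε.comp continuousOn_snd fun _ h => h.2))

theorem exists_dual_certificate [CompleteSpace E] [CompleteSpace F] (hU : IsCompact U)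
    (hD : IsCompact D) (hCi : ContinuousOn Ci U) (hCiconv : ConvexOn ℝ U Ci)
    (hε : ContinuousOn ε D) (hεconv : ConvexOn ℝ D ε) {v : F} {u₀ : E} (hu₀ : u₀ ∈ U)
    (hz₀ : v + B u₀ ∈ D) {c : ℝ} (hc : ∀ u ∈ U, v + B u ∈ D → c < Ci u + ε (v + B u)) :
    ∃ y : F, ∀ u ∈ U, ∀ z ∈ D,
      (⟪u, -(ContinuousLinearMap.adjoint B) y⟫ - Ci u) + (⟪z, y⟫ - ε z) ≤ ⟪y, v⟫ - c := by
  have hP : (-v, c) ∉ valueEpigraph B U D Ci ε := by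
    rintro ⟨u, hu, z, hz, hvz, hle⟩
    obtain rfl : z = v + B u := by
      rw [eq_sub_iff_add_eq] at hvz
      rw [← hvz]; simp
    exact (hc u hu hz).not_ge hle
  obtain ⟨f, α, hfP, hfC⟩ := geometric_hahn_banach_point_closed
    (convex_valueEpigraph hCiconv hεconv) (isClosed_valueEpigraph hU hD hCi hε) hP
  set b := f (0, 1)
  have hf : ∀ x t, f (x, t) = f (x, 0) + t * b := fun x t => by
    rw [← smul_eq_mul, ← map_smul, ← map_add, Prod.smul_mk, smul_zero, smul_eq_mul, mul_one,
      Prod.mk_add_mk, add_zero, zero_add]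
  -- `(-v, c)` lies strictly below a point of the epigraph with the same first coordinate.
  have hb : 0 < b := by
    have h₀ := hfC (-v, Ci u₀ + ε (v + B u₀)) ⟨u₀, hu₀, _, hz₀, by simp, le_rfl⟩
    have := hc u₀ hu₀ hz₀
    rw [hf] at hfP h₀
    nlinarith
  set y := (InnerProductSpace.toDual ℝ F).symm (b⁻¹ • f.comp (ContinuousLinearMap.inl ℝ F ℝ))
  have hy : ∀ x, f (x, 0) = b * ⟪y, x⟫ := fun x => by
    simp only [y, InnerProductSpace.toDual_symm_apply, FunLike.coe_smul, Pi.smul_apply,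
      ContinuousLinearMap.comp_apply, ContinuousLinearMap.inl_apply, smul_eq_mul]
    field_simp
  refine ⟨y, fun u hu z hz => ?_⟩
  have hsep := hfP.trans (hfC (B u - z, Ci u + ε z) ⟨u, hu, z, hz, rfl, le_rfl⟩)
  rw [hf (-v), hf (B u - z), hy, hy, inner_neg_right, inner_sub_right] at hsep
  rw [inner_neg_right, ContinuousLinearMap.adjoint_inner_right, real_inner_comm y (B u),
    real_inner_comm y z]
  nlinarith

end Separation

section Duality

noncomputable def dualFun {m n : ℕ} (U : Set (EuclideanSpace ℝ (Fin m)))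
    (Ci : EuclideanSpace ℝ (Fin m) → ℝ) (D : Set (EuclideanSpace ℝ (Fin n)))
    (ε : EuclideanSpace ℝ (Fin n) → ℝ)
    (B : EuclideanSpace ℝ (Fin m) →L[ℝ] EuclideanSpace ℝ (Fin n))
    (y : EuclideanSpace ℝ (Fin n)) : ℝ :=
  conjOn U Ci (-(ContinuousLinearMap.adjoint B) y) + conjOn D ε y

variable {m n : ℕ} {U : Set (EuclideanSpace ℝ (Fin m))} {D : Set (EuclideanSpace ℝ (Fin n))}
  {Ci : EuclideanSpace ℝ (Fin m) → ℝ} {ε : EuclideanSpace ℝ (Fin n) → ℝ}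
  {B : EuclideanSpace ℝ (Fin m) →L[ℝ] EuclideanSpace ℝ (Fin n)}

theorem inner_sub_dualFun_le (hU : IsCompact U) (hD : IsCompact D) (hCi : ContinuousOn Ci U)
    (hε : ContinuousOn ε D) {v : EuclideanSpace ℝ (Fin n)} {u : EuclideanSpace ℝ (Fin m)}
    (hu : u ∈ U) (hvu : v + B u ∈ D) (y : EuclideanSpace ℝ (Fin n)) :
    ⟪y, v⟫ - dualFun U Ci D ε B y ≤ Ci u + ε (v + B u) := by
  have hU' := le_conjOn hU hCi hu (-(ContinuousLinearMap.adjoint B) y)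
  have hD' := le_conjOn hD hε hvu y
  rw [inner_neg_right, ContinuousLinearMap.adjoint_inner_right] at hU'
  rw [inner_add_left, real_inner_comm y v] at hD'
  unfold dualFun
  linarith

theorem bddAbove_range_inner_sub_dualFun (hU : IsCompact U) (hD : IsCompact D)
    (hCi : ContinuousOn Ci U) (hε : ContinuousOn ε D) {v : EuclideanSpace ℝ (Fin n)}
    (hfeas : ∃ u ∈ U, v + B u ∈ D) :
    BddAbove (range fun y => ⟪y, v⟫ - dualFun U Ci D ε B y) := by
  obtain ⟨u, hu, hvu⟩ := hfeas
  exact ⟨_, forall_mem_range.2 (inner_sub_dualFun_le hU hD hCi hε hu hvu)⟩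

theorem sSup_inner_sub_dualFun_eq_sInf (hU : IsCompact U) (hD : IsCompact D)
    (hCi : ContinuousOn Ci U) (hCiconv : ConvexOn ℝ U Ci) (hε : ContinuousOn ε D)
    (hεconv : ConvexOn ℝ D ε) {v : EuclideanSpace ℝ (Fin n)} (hfeas : ∃ u ∈ U, v + B u ∈ D) :
    sSup (range fun y => ⟪y, v⟫ - dualFun U Ci D ε B y) =
      sInf {c | ∃ u ∈ U, v + B u ∈ D ∧ c = Ci u + ε (v + B u)} := by
  obtain ⟨u₀, hu₀, hvu₀⟩ := hfeas
  have hne : {c | ∃ u ∈ U, v + B u ∈ D ∧ c = Ci u + ε (v + B u)}.Nonempty :=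
    ⟨_, u₀, hu₀, hvu₀, rfl⟩
  have hbdd := bddAbove_range_inner_sub_dualFun hU hD hCi hε ⟨u₀, hu₀, hvu₀⟩
  have hbddBelow : BddBelow {c | ∃ u ∈ U, v + B u ∈ D ∧ c = Ci u + ε (v + B u)} :=
    ⟨_, fun _ ⟨u, hu, hvu, hc⟩ => hc ▸ inner_sub_dualFun_le hU hD hCi hε hu hvu 0⟩
  refine le_antisymm (csSup_le (range_nonempty _) ?_) (le_of_forall_lt_imp_le_of_dense ?_)
  · rintro _ ⟨y, rfl⟩
    exact le_csInf hne fun _ ⟨u, hu, hvu, hc⟩ => hc ▸ inner_sub_dualFun_le hU hD hCi hε hu hvu y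
  · intro c hc
    obtain ⟨y, hy⟩ := exists_dual_certificate hU hD hCi hCiconv hε hεconv hu₀ hvu₀
      fun u hu hvu => hc.trans_le (csInf_le hbddBelow ⟨u, hu, hvu, rfl⟩)
    have hdual : dualFun U Ci D ε B y ≤ ⟪y, v⟫ - c := conjOn_add_conjOn_le ⟨u₀, hu₀⟩ ⟨_, hvu₀⟩ hy
    have hsup := le_csSup hbdd (mem_range_self y)
    linarith

theorem abs_dualFun_sub_le (hU : IsCompact U) (hUne : U.Nonempty) (hD : IsCompact D)
    (hDne : D.Nonempty) (hCi : ContinuousOn Ci U) (hε : ContinuousOn ε D)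
    (y y' : EuclideanSpace ℝ (Fin n)) :
    |dualFun U Ci D ε B y - dualFun U Ci D ε B y'| ≤
      (‖B‖ * sSup ((fun u => ‖u‖) '' U) + sSup ((fun z => ‖z‖) '' D)) * ‖y - y'‖ := by
  set RU := sSup ((fun u => ‖u‖) '' U)
  have hRU : 0 ≤ RU := Real.sSup_nonneg (forall_mem_image.2 fun _ _ => norm_nonneg _)
  have hadj : ‖-(ContinuousLinearMap.adjoint B) y - -(ContinuousLinearMap.adjoint B) y'‖ ≤
      ‖B‖ * ‖y - y'‖ := by
    rw [neg_sub_neg, ← map_sub, ← LinearIsometryEquiv.norm_map ContinuousLinearMap.adjoint B,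
      norm_sub_rev y]
    exact ContinuousLinearMap.le_opNorm _ _
  have hUpart := abs_conjOn_sub_conjOn_le hU hUne hCi (fun _ hu => norm_le_sSup_norm_image hU hu)
    (-(ContinuousLinearMap.adjoint B) y) (-(ContinuousLinearMap.adjoint B) y')
  have hDpart := abs_conjOn_sub_conjOn_le hD hDne hε (fun _ hz => norm_le_sSup_norm_image hD hz)
    y y'
  calc |dualFun U Ci D ε B y - dualFun U Ci D ε B y'|
      ≤ |conjOn U Ci (-(ContinuousLinearMap.adjoint B) y) -
            conjOn U Ci (-(ContinuousLinearMap.adjoint B) y')| +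
          |conjOn D ε y - conjOn D ε y'| := by
        unfold dualFun
        rw [add_sub_add_comm]
        exact abs_add_le _ _
    _ ≤ RU * (‖B‖ * ‖y - y'‖) + sSup ((fun z => ‖z‖) '' D) * ‖y - y'‖ :=
        add_le_add (hUpart.trans (mul_le_mul_of_nonneg_left hadj hRU)) hDpart
    _ = _ := by ring

end Duality

theorem dCDP_vs_Bellman_error_general {n m : ℕ}
    (X : Set (EuclideanSpace ℝ (Fin n))) (hXc : IsCompact X)
    (W : Finset (EuclideanSpace ℝ (Fin n))) (hWne : W.Nonempty)
    (p : EuclideanSpace ℝ (Fin n) → ℝ)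
    (hp : ∀ w ∈ W, 0 ≤ p w) (hpsum : ∑ w ∈ W, p w = 1)
    (γ : ℝ) (hγ : 0 < γ)
    (D : Set (EuclideanSpace ℝ (Fin n)))
    (hD : D = {z | ∀ w ∈ W, z + w ∈ X}) (hDne : D.Nonempty)
    (Xd XD : Finset (EuclideanSpace ℝ (Fin n))) (hXd : Xd.Nonempty)
    (hXD : (↑XD : Set (EuclideanSpace ℝ (Fin n))) = (↑Xd : Set (EuclideanSpace ℝ (Fin n))) ∩ D)
    (hXDne : XD.Nonempty)
    (U : Set (EuclideanSpace ℝ (Fin m))) (hUne : U.Nonempty) (hUc : IsCompact U)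
    (Ud : Finset (EuclideanSpace ℝ (Fin m))) (hUdne : Ud.Nonempty)
    (hUdsub : (↑Ud : Set (EuclideanSpace ℝ (Fin m))) ⊆ U)
    (Ci : EuclideanSpace ℝ (Fin m) → ℝ) (hCiconv : ConvexOn ℝ U Ci)
    (Ki : ℝ) (hKi : 0 ≤ Ki)
    (hCiLip : ∀ u ∈ U, ∀ u' ∈ U, |Ci u - Ci u'| ≤ Ki * ‖u - u'‖)
    (B : EuclideanSpace ℝ (Fin m) →L[ℝ] EuclideanSpace ℝ (Fin n))
    (J : EuclideanSpace ℝ (Fin n) → ℝ) (hJconv : ConvexOn ℝ X J)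
    (K : ℝ) (hK : 0 ≤ K)
    (hJLip : ∀ x ∈ X, ∀ x' ∈ X, |J x - J x'| ≤ K * ‖x - x'‖)
    (ε : EuclideanSpace ℝ (Fin n) → ℝ)
    (hε : ∀ z, ε z = γ * ∑ w ∈ W, p w * J (z + w))
    (e_e : ℝ)
    (εt : EuclideanSpace ℝ (Fin n) → ℝ)
    (hεt : ∀ x ∈ XD, |ε x - εt x| ≤ γ * e_e)
    (Y : Finset (EuclideanSpace ℝ (Fin n))) (hYne : Y.Nonempty)
    (A : EuclideanSpace ℝ (Fin m) → ℝ) (e_v : ℝ) (hev : 0 ≤ e_v)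
    (hA : ∀ y ∈ Y,
      0 ≤ A (-(ContinuousLinearMap.adjoint B) y) -
          Ud.sup' hUdne (fun u => ⟪u, -(ContinuousLinearMap.adjoint B) y⟫ - Ci u) ∧
      A (-(ContinuousLinearMap.adjoint B) y) -
          Ud.sup' hUdne (fun u => ⟪u, -(ContinuousLinearMap.adjoint B) y⟫ - Ci u) ≤ e_v)
    (φ : EuclideanSpace ℝ (Fin n) → ℝ)
    (hφ : ∀ y, φ y = conjOn U Ci (-(ContinuousLinearMap.adjoint B) y) + conjOn D ε y)
    (ϕd : EuclideanSpace ℝ (Fin n) → ℝ)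
    (hϕd : ∀ y, ϕd y =
      A (-(ContinuousLinearMap.adjoint B) y) + XD.sup' hXDne (fun x => ⟪x, y⟫ - εt x))
    (fs : EuclideanSpace ℝ (Fin n) → EuclideanSpace ℝ (Fin n))
    (δ : ℝ) (hδ : 0 ≤ δ)
    (hatt : ∀ x ∈ Xd, ∃ yx : EuclideanSpace ℝ (Fin n),
      sSup (Set.range fun y => ⟪y, fs x⟫ - φ y) = ⟪yx, fs x⟫ - φ yx ∧
      Metric.infDist yx (↑Y : Set (EuclideanSpace ℝ (Fin n))) ≤ δ)
    (M e_u e_x e_y : ℝ)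
    (hM : M = ‖B‖ * sSup ((fun u => ‖u‖) '' U) + sSup ((fun z => ‖z‖) '' D))
    (heu : e_u = (‖B‖ * Y.sup' hYne (fun y => ‖y‖) + Ki) *
      dOneSided U (↑Ud : Set (EuclideanSpace ℝ (Fin m))))
    (hex : e_x = (Y.sup' hYne (fun y => ‖y‖) + γ * K) *
      dOneSided D (↑XD : Set (EuclideanSpace ℝ (Fin n))))
    (hey : e_y = (Xd.sup' hXd (fun x => ‖fs x‖) + M) * δ)
    (Ehat : EuclideanSpace ℝ (Fin n) → ℝ) (e_z : ℝ)
    (hE : ∀ x ∈ Xd,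
      0 ≤ Ehat x - Y.sup' hYne (fun y => ⟪y, fs x⟫ - ϕd y) ∧
      Ehat x - Y.sup' hYne (fun y => ⟪y, fs x⟫ - ϕd y) ≤ e_z)
    (hfeas : ∀ x ∈ Xd, ∃ u ∈ U, fs x + B u ∈ D) :
    (∀ x ∈ Xd,
      |Ehat x -
          sInf {c : ℝ | ∃ u ∈ U, fs x + B u ∈ D ∧
            c = Ci u + γ * ∑ w ∈ W, p w * J (fs x + B u + w)}| ≤
        γ * e_e + (e_u + e_v + e_x + e_y + e_z)) ∧
    ∀ Cs : EuclideanSpace ℝ (Fin n) → ℝ,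
      Xd.sup' hXd (fun x =>
          |(Cs x + Ehat x) -
            (Cs x + sInf {c : ℝ | ∃ u ∈ U, fs x + B u ∈ D ∧
              c = Ci u + γ * ∑ w ∈ W, p w * J (fs x + B u + w)})|) ≤
        γ * e_e + (e_u + e_v + e_x + e_y + e_z) := by
  have hmemD : ∀ z ∈ D, ∀ w ∈ W, z + w ∈ X := fun z hz => by rwa [hD] at hz
  have hDc : IsCompact D := hD ▸ isCompact_setOf_forall_add_mem hXc (Finset.coe_nonempty.2 hWne)
  have hγK : 0 ≤ γ * K := mul_nonneg hγ.le hK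
  have hεlip : ∀ z ∈ D, ∀ z' ∈ D, |ε z - ε z'| ≤ γ * K * ‖z - z'‖ := fun z hz z' hz' => by
    rw [hε, hε]; exact abs_expectedCost_sub_le hJLip hp hpsum hγ.le (hmemD z hz) (hmemD z' hz')
  have hεconv : ConvexOn ℝ D ε := by
    rw [funext hε, hD]; exact convexOn_expectedCost hJconv hp hγ.le
  have hCicont := continuousOn_of_abs_sub_le hCiLip
  have hεcont := continuousOn_of_abs_sub_le hεlip
  have hXDD : (XD : Set (EuclideanSpace ℝ (Fin n))) ⊆ D := hXD ▸ inter_subset_right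
  obtain rfl : φ = dualFun U Ci D ε B := funext hφ
  have hM₀ : 0 ≤ M := hM ▸ add_nonneg
    (mul_nonneg (norm_nonneg B) (Real.sSup_nonneg (forall_mem_image.2 fun _ _ => norm_nonneg _)))
    (Real.sSup_nonneg (forall_mem_image.2 fun _ _ => norm_nonneg _))
  set ρ := Y.sup' hYne (fun y => ‖y‖)
  have hρ : ∀ y ∈ Y, ‖y‖ ≤ ρ := fun y hy => Y.le_sup' (fun y => ‖y‖) hy
  have hρ₀ : 0 ≤ ρ := (norm_nonneg _).trans (hρ _ hYne.choose_spec)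
  have heu₀ : 0 ≤ e_u :=
    heu ▸ mul_nonneg (add_nonneg (mul_nonneg (norm_nonneg B) hρ₀) hKi) (dOneSided_nonneg _ _)
  have hex₀ : 0 ≤ e_x := hex ▸ mul_nonneg (add_nonneg hρ₀ hγK) (dOneSided_nonneg _ _)
  have hgrid : ∀ y ∈ Y, dualFun U Ci D ε B y ≤ ϕd y + (e_u + e_x + γ * e_e) ∧
      ϕd y ≤ dualFun U Ci D ε B y + (e_v + γ * e_e) := fun y hy => by
    set q := -(ContinuousLinearMap.adjoint B) y
    have hq : ‖q‖ ≤ ‖B‖ * ρ := by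
      rw [norm_neg, ← LinearIsometryEquiv.norm_map ContinuousLinearMap.adjoint B]
      exact (ContinuousLinearMap.le_opNorm _ _).trans (by gcongr; exact hρ y hy)
    have heu' : (‖q‖ + Ki) * dOneSided U Ud ≤ e_u :=
      heu ▸ mul_le_mul_of_nonneg_right (by linarith) (dOneSided_nonneg _ _)
    have hex' : (‖y‖ + γ * K) * dOneSided D XD ≤ e_x :=
      hex ▸ mul_le_mul_of_nonneg_right (by linarith [hρ y hy]) (dOneSided_nonneg _ _)
    have hU := conjOn_le_finset_sup'_add hUc hKi hCiLip hUdne hUdsub q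
    have hU' := finset_sup'_le_conjOn hUc hCicont hUdne hUdsub q
    have hDgrid := conjOn_le_finset_sup'_add_of_abs_sub_le hDc hγK hεlip hXDne hXDD hεt y
    have hDgrid' := finset_sup'_le_conjOn_add hDc hεcont hXDne hXDD hεt y
    rw [hϕd]
    unfold dualFun
    constructor <;> linarith [hA y hy]
  have hpoint : ∀ x ∈ Xd,
      |Ehat x - sInf {c : ℝ | ∃ u ∈ U, fs x + B u ∈ D ∧
          c = Ci u + γ * ∑ w ∈ W, p w * J (fs x + B u + w)}| ≤
        γ * e_e + (e_u + e_v + e_x + e_y + e_z) := fun x hx => by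
    have hduality := sSup_inner_sub_dualFun_eq_sInf hUc hDc hCicont hCiconv hεcont hεconv
      (hfeas x hx)
    simp only [hε] at hduality
    obtain ⟨yx, hyx, hδx⟩ := hatt x hx
    have hbounds := sub_sSup_range_mem_Icc hYne hM₀
      (hM ▸ abs_dualFun_sub_le hUc hUne hDc hDne hCicont hεcont)
      (fun y hy => (hgrid y hy).1) (fun y hy => (hgrid y hy).2)
      (bddAbove_range_inner_sub_dualFun hUc hDc hCicont hεcont (hfeas x hx)) hyx hδx (hE x hx)
    have hey' : (‖fs x‖ + M) * δ ≤ e_y :=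
      hey ▸ mul_le_mul_of_nonneg_right (by linarith [Xd.le_sup' (fun x => ‖fs x‖) hx]) hδ
    have hey₀ : 0 ≤ (‖fs x‖ + M) * δ := by positivity
    rw [← hduality]
    obtain ⟨hE₀, hEz⟩ := hE x hx
    exact abs_le.2 ⟨by linarith [hbounds.1], by linarith [hbounds.2]⟩
  exact ⟨hpoint, fun Cs => Finset.sup'_le _ _ fun x hx => by
    rw [add_sub_add_left_eq_sub]; exact hpoint x hx⟩

/-- Proposition A.8 (error of the d-CDP operation): under convexity the exact CDP operator
coincides with the Bellman (DP) operator, so the discrete conjugate DP output `Ê`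
approximates the discretized Bellman update within `γ·e_e + e_d`,
where `e_d = e_u + e_v + e_x + e_y + e_z`. -/
theorem dCDP_vs_Bellman_error {n m : ℕ}
    (X : Set (EuclideanSpace ℝ (Fin n))) (hXne : X.Nonempty) (hXc : IsCompact X)
    (hXconv : Convex ℝ X)
    (W : Finset (EuclideanSpace ℝ (Fin n))) (hWne : W.Nonempty)
    (p : EuclideanSpace ℝ (Fin n) → ℝ)
    (hp : ∀ w ∈ W, 0 ≤ p w) (hpsum : ∑ w ∈ W, p w = 1)
    (γ : ℝ) (hγ : 0 < γ)
    (D : Set (EuclideanSpace ℝ (Fin n)))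
    (hD : D = {z | ∀ w ∈ W, z + w ∈ X}) (hDne : D.Nonempty)
    (Xd XD : Finset (EuclideanSpace ℝ (Fin n))) (hXd : Xd.Nonempty)
    (hXD : (↑XD : Set (EuclideanSpace ℝ (Fin n))) = (↑Xd : Set (EuclideanSpace ℝ (Fin n))) ∩ D)
    (hXDne : XD.Nonempty)
    (U : Set (EuclideanSpace ℝ (Fin m))) (hUne : U.Nonempty) (hUc : IsCompact U)
    (hUconv : Convex ℝ U)
    (Ud : Finset (EuclideanSpace ℝ (Fin m))) (hUdne : Ud.Nonempty)
    (hUdsub : (↑Ud : Set (EuclideanSpace ℝ (Fin m))) ⊆ U)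
    (Ci : EuclideanSpace ℝ (Fin m) → ℝ) (hCi : Continuous Ci) (hCiconv : ConvexOn ℝ U Ci)
    (Ki : ℝ) (hKi : 0 ≤ Ki)
    (hCiLip : ∀ u ∈ U, ∀ u' ∈ U, |Ci u - Ci u'| ≤ Ki * ‖u - u'‖)
    (B : EuclideanSpace ℝ (Fin m) →L[ℝ] EuclideanSpace ℝ (Fin n))
    (J : EuclideanSpace ℝ (Fin n) → ℝ) (hJconv : ConvexOn ℝ X J)
    (K : ℝ) (hK : 0 ≤ K)
    (hJLip : ∀ x ∈ X, ∀ x' ∈ X, |J x - J x'| ≤ K * ‖x - x'‖)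
    (ε : EuclideanSpace ℝ (Fin n) → ℝ)
    (hε : ∀ z, ε z = γ * ∑ w ∈ W, p w * J (z + w))
    (e_e : ℝ) (hee : 0 ≤ e_e)
    (εt : EuclideanSpace ℝ (Fin n) → ℝ)
    (hεt : ∀ x ∈ XD, |ε x - εt x| ≤ γ * e_e)
    (Y : Finset (EuclideanSpace ℝ (Fin n))) (hYne : Y.Nonempty)
    (A : EuclideanSpace ℝ (Fin m) → ℝ) (e_v : ℝ) (hev : 0 ≤ e_v)
    (hA : ∀ y ∈ Y,
      0 ≤ A (-(ContinuousLinearMap.adjoint B) y) -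
          Ud.sup' hUdne (fun u => ⟪u, -(ContinuousLinearMap.adjoint B) y⟫ - Ci u) ∧
      A (-(ContinuousLinearMap.adjoint B) y) -
          Ud.sup' hUdne (fun u => ⟪u, -(ContinuousLinearMap.adjoint B) y⟫ - Ci u) ≤ e_v)
    (φ : EuclideanSpace ℝ (Fin n) → ℝ)
    (hφ : ∀ y, φ y = conjOn U Ci (-(ContinuousLinearMap.adjoint B) y) + conjOn D ε y)
    (ϕd : EuclideanSpace ℝ (Fin n) → ℝ)
    (hϕd : ∀ y, ϕd y =
      A (-(ContinuousLinearMap.adjoint B) y) + XD.sup' hXDne (fun x => ⟪x, y⟫ - εt x))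
    (fs : EuclideanSpace ℝ (Fin n) → EuclideanSpace ℝ (Fin n))
    (δ : ℝ) (hδ : 0 ≤ δ)
    (hatt : ∀ x ∈ Xd, ∃ yx : EuclideanSpace ℝ (Fin n),
      sSup (Set.range fun y => ⟪y, fs x⟫ - φ y) = ⟪yx, fs x⟫ - φ yx ∧
      Metric.infDist yx (↑Y : Set (EuclideanSpace ℝ (Fin n))) ≤ δ)
    (M e_u e_x e_y : ℝ)
    (hM : M = ‖B‖ * sSup ((fun u => ‖u‖) '' U) + sSup ((fun z => ‖z‖) '' D))
    (heu : e_u = (‖B‖ * Y.sup' hYne (fun y => ‖y‖) + Ki) *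
      dOneSided U (↑Ud : Set (EuclideanSpace ℝ (Fin m))))
    (hex : e_x = (Y.sup' hYne (fun y => ‖y‖) + γ * K) *
      dOneSided D (↑XD : Set (EuclideanSpace ℝ (Fin n))))
    (hey : e_y = (Xd.sup' hXd (fun x => ‖fs x‖) + M) * δ)
    (Ehat : EuclideanSpace ℝ (Fin n) → ℝ) (e_z : ℝ) (hez : 0 ≤ e_z)
    (hE : ∀ x ∈ Xd,
      0 ≤ Ehat x - Y.sup' hYne (fun y => ⟪y, fs x⟫ - ϕd y) ∧
      Ehat x - Y.sup' hYne (fun y => ⟪y, fs x⟫ - ϕd y) ≤ e_z)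
    (hfeas : ∀ x ∈ Xd, ∃ u ∈ U, fs x + B u ∈ D) :
    (∀ x ∈ Xd,
      |Ehat x -
          sInf {c : ℝ | ∃ u ∈ U, fs x + B u ∈ D ∧
            c = Ci u + γ * ∑ w ∈ W, p w * J (fs x + B u + w)}| ≤
        γ * e_e + (e_u + e_v + e_x + e_y + e_z)) ∧
    ∀ Cs : EuclideanSpace ℝ (Fin n) → ℝ,
      Xd.sup' hXd (fun x =>
          |(Cs x + Ehat x) -
            (Cs x + sInf {c : ℝ | ∃ u ∈ U, fs x + B u ∈ D ∧
              c = Ci u + γ * ∑ w ∈ W, p w * J (fs x + B u + w)})|) ≤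
        γ * e_e + (e_u + e_v + e_x + e_y + e_z) :=
  dCDP_vs_Bellman_error_general X hXc W hWne p hp hpsum γ hγ D hD hDne Xd XD hXd hXD hXDne U hUne
    hUc Ud hUdne hUdsub Ci hCiconv Ki hKi hCiLip B J hJconv K hK hJLip ε hε e_e εt hεt Y hYne A e_v
    hev hA φ hφ ϕd hϕd fs δ hδ hatt M e_u e_x e_y hM heu hex hey Ehat e_z hE hfeas
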